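/- For the greedy routing Markov chain on the directed n-cycle with independent shortcuts distributed by ℓ, the hitting probabilities to destination 0 satisfy the backwards equation h(x) = Σ_{ξ=x+1}^{n-1} h(ξ)ℓ(ξ−x) + h(x+1)·Σ_{ξ=x+2}^{n-1} ℓ(ξ) + 1/(n−1), for 1 ≤ x ≤ n−2, where h(n−1) = 1/(n−1). -/

import Mathlib

open Finset
open scoped Classical

/-- One greedy routing step toward destination `0` on the directed `n`-cycle:
from `v ≠ 0` move to whichever of the shortcut endpoint `E v` and the base-edge
successor `v - 1` is closer to `0`. -/
def gstep (n : ℕ) [NeZero n] (E : ZMod n → ZMod n) (v : ZMod n) : ZMod n :=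
  if v = 0 then 0 else if (E v).val < (v - 1).val then E v else v - 1

/-- The greedy walk from `y` toward `0` passes through `x`. -/
def hits (n : ℕ) [NeZero n] (E : ZMod n → ZMod n) (y x : ZMod n) : Prop :=
  ∃ t ≤ n, (gstep n E)^[t] y = x

/-- Product weight: each vertex independently has one shortcut whose (directed)
length is distributed according to `ℓ`. -/
noncomputable def wProd (n : ℕ) [NeZero n] (ℓ : ℕ → ℝ) (E : ZMod n → ZMod n) : ℝ :=
  ∏ x : ZMod n, ℓ ((x - E x).val)

/-- Hitting probability of the vertex at distance `x` for a greedy query to `0` from a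
start uniform on the `n - 1` non-destination vertices. -/
noncomputable def hitProb (n : ℕ) [NeZero n] (ℓ : ℕ → ℝ) (x : ZMod n) : ℝ :=
  ∑ E : ZMod n → ZMod n, wProd n ℓ E *
    ((∑ y ∈ (univ : Finset (ZMod n)).erase 0, if hits n E y x then (1 : ℝ) else 0)
      / ((n : ℝ) - 1))

/-!
The distance to `0` strictly decreases along the greedy walk until it is absorbed at `0`, so a
vertex `x ≠ 0` is visited at most once, and a walk visiting `x` either starts there or enters it
from a unique predecessor `ξ` with `gstep ξ = x`. Hence the number `N x` of starts whose walk
visits `x` satisfies `N x = 1 + ∑_ξ [gstep ξ = x] N ξ`. Whether the walk reaches `ξ` does not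
depend on the shortcut at `ξ`, so under the product law the event `gstep ξ = x` is independent of
`N ξ`, and taking expectations gives `h x = 1/(n-1) + ∑_ξ P(gstep ξ = x) h ξ`; the probabilities
`P(gstep ξ = x)` are read off from the law of the shortcut length at `ξ`.
-/

open Function

section Iterate

variable {α : Type*} {f g : α → α} {x y : α}

theorem iterate_eq_iterate_of_notMem_periodicPts (hx : x ∉ periodicPts f) {s t : ℕ}
    (hs : f^[s] y = x) (ht : f^[t] y = x) : s = t := by
  wlog hst : s ≤ t generalizing s t
  · exact (this ht hs (by omega)).symm
  have hper : f^[t - s] x = x := by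
    rw [← hs, ← iterate_add_apply, Nat.sub_add_cancel hst, ht, hs]
  by_contra hne
  exact hx (mk_mem_periodicPts (by omega) hper)

theorem ite_exists_iterate_eq_add_sum [Fintype α] [DecidableEq α] (hx : x ∉ periodicPts f) :
    (if ∃ t, f^[t] y = x then (1 : ℝ) else 0) =
      (if y = x then 1 else 0) + ∑ ξ with f ξ = x, if ∃ t, f^[t] y = ξ then 1 else 0 := by
  have reach_succ {ξ s} (hξ : f ξ = x) (hs : f^[s] y = ξ) : f^[s + 1] y = x := by
    rw [iterate_succ_apply', hs, hξ]
  by_cases hyx : y = x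
  · subst hyx
    rw [if_pos ⟨0, rfl⟩, if_pos rfl, sum_eq_zero, add_zero]
    rintro ξ hξ
    refine if_neg fun ⟨s, hs⟩ => ?_
    have := iterate_eq_iterate_of_notMem_periodicPts hx (reach_succ (mem_filter.1 hξ).2 hs)
      (show f^[0] y = y from rfl)
    omega
  rw [if_neg hyx, zero_add]
  by_cases hreach : ∃ t, f^[t] y = x
  · obtain ⟨_ | t, ht⟩ := hreach
    · exact absurd ht hyx
    rw [if_pos ⟨t + 1, ht⟩, sum_eq_single_of_mem (f^[t] y), if_pos ⟨t, rfl⟩]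
    · simpa [← iterate_succ_apply' f t y] using ht
    rintro ξ hξ hne
    refine if_neg fun ⟨s, hs⟩ => hne ?_
    have := iterate_eq_iterate_of_notMem_periodicPts hx (reach_succ (mem_filter.1 hξ).2 hs) ht
    rw [← hs, Nat.succ_injective this]
  · rw [if_neg hreach, sum_eq_zero]
    rintro ξ hξ
    exact if_neg fun ⟨s, hs⟩ => hreach ⟨s + 1, reach_succ (mem_filter.1 hξ).2 hs⟩

theorem exists_iterate_eq_of_eqOn_compl (h : ∀ v, v ≠ x → f v = g v) :
    (∃ t, f^[t] y = x) → ∃ t, g^[t] y = x := by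
  rintro ⟨t, ht⟩
  induction t generalizing y with
  | zero => exact ⟨0, ht⟩
  | succ t ih =>
    by_cases hy : y = x
    · exact ⟨0, hy⟩
    · rw [iterate_succ_apply, h y hy] at ht
      obtain ⟨s, hs⟩ := ih ht
      exact ⟨s + 1, hs⟩

end Iterate

section Independence

variable {ι β : Type*} [Fintype ι] [DecidableEq ι] [Fintype β]

theorem sum_prod_mul_mul_eq_of_indep (p : ι → β → ℝ) (i : ι) (hp : ∑ b, p i b = 1) (A : β → ℝ)
    (G : (ι → β) → ℝ) (hG : ∀ E E', (∀ j ≠ i, E j = E' j) → G E = G E') :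
    ∑ E, (∏ j, p j (E j)) * A (E i) * G E =
      (∑ b, p i b * A b) * ∑ E, (∏ j, p j (E j)) * G E := by
  let e := Equiv.funSplitAt i β
  let K (b : β) : ℝ :=
    ∑ E' : {j // j ≠ i} → β, (∏ j : {j // j ≠ i}, p j (E' j)) * G (e.symm (b, E'))
  have hK (b b' : β) : K b = K b' := by
    refine sum_congr rfl fun E' _ => congrArg _ (hG _ _ fun j hj => ?_)
    simp [e, hj]
  have split (B : β → ℝ) : ∑ E, (∏ j, p j (E j)) * B (E i) * G E = ∑ b, p i b * B b * K b := by
    rw [← e.symm.sum_comp, Fintype.sum_prod_type]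
    refine sum_congr rfl fun b _ => ?_
    rw [mul_sum]
    refine sum_congr rfl fun E' _ => ?_
    have hat : e.symm (b, E') i = b := by simp [e]
    have hoff (j : {j // j ≠ i}) : e.symm (b, E') j = E' j := by simp [e, j.2]
    rw [Fintype.prod_eq_mul_prod_subtype_ne _ i, hat]
    simp only [hoff]
    ring
  have hmass : ∑ E, (∏ j, p j (E j)) * G E = ∑ b, p i b * K b := by simpa using split 1
  rw [split, hmass, sum_mul]
  refine sum_congr rfl fun b _ => ?_
  simp_rw [hK _ b, ← sum_mul, hp]
  ring

end Independence

/-- Distance to `0` after one greedy step from distance `d` with a shortcut of length `L`: shortcuts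
of length `≤ 1` or overshooting `0` lose to the base edge (at `d = 0` truncated subtraction gives
`0`). -/
def greedyDist (d L : ℕ) : ℕ := if 2 ≤ L ∧ L ≤ d then d - L else d - 1

theorem greedyDist_le (d L : ℕ) : greedyDist d L ≤ d - 1 := by
  unfold greedyDist; split_ifs <;> omega

section Greedy

variable {n : ℕ} [NeZero n] {E E' : ZMod n → ZMod n} {v x y : ZMod n}

theorem ZMod.val_sub_eq_ite (a b : ZMod n) :
    (a - b).val = if b.val ≤ a.val then a.val - b.val else a.val + n - b.val := by
  split_ifs with hba
  · exact ZMod.val_sub hba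
  have hsum : a = (a - b) + b := (sub_add_cancel a b).symm
  rcases lt_or_ge ((a - b).val + b.val) n with h | h
  · have := ZMod.val_add_of_lt h
    rw [← hsum] at this
    omega
  · have := ZMod.val_add_of_le h
    rw [← hsum] at this
    omega

theorem ZMod.val_sub_one_of_ne_zero (hv : v ≠ 0) : (v - 1).val = v.val - 1 := by
  have hv' := (ZMod.val_ne_zero v).2 hv
  have h1 : (1 : ZMod n).val = 1 := by
    rw [ZMod.val_one_eq_one_mod, Nat.one_mod_eq_one]
    have := ZMod.val_lt v
    omega
  rw [ZMod.val_sub (by omega), h1]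

theorem val_gstep (E : ZMod n → ZMod n) (v : ZMod n) :
    (gstep n E v).val = greedyDist v.val (v - E v).val := by
  unfold gstep greedyDist
  by_cases hv : v = 0
  · subst hv
    rw [if_pos rfl]
    simp
  have hE := ZMod.val_sub_eq_ite v (v - E v)
  rw [sub_sub_cancel] at hE
  have hv1 := ZMod.val_sub_one_of_ne_zero hv
  have hv0 := (ZMod.val_ne_zero v).2 hv
  have := ZMod.val_lt (v - E v)
  rw [if_neg hv]
  split_ifs at hE ⊢ <;> omega

theorem gstep_zero (E : ZMod n → ZMod n) : gstep n E 0 = 0 := if_pos rfl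

theorem val_gstep_lt (E : ZMod n → ZMod n) (hv : v ≠ 0) : (gstep n E v).val < v.val := by
  have := (ZMod.val_ne_zero v).2 hv
  have := greedyDist_le v.val (v - E v).val
  rw [val_gstep]; omega

theorem val_iterate_gstep_add_le {t : ℕ} (h : (gstep n E)^[t] y ≠ 0) :
    ((gstep n E)^[t] y).val + t ≤ y.val := by
  induction t with
  | zero => rfl
  | succ t ih =>
    rw [iterate_succ_apply'] at h ⊢
    have hprev : (gstep n E)^[t] y ≠ 0 := fun h0 => h (by rw [h0, gstep_zero])
    have := val_gstep_lt E hprev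
    have := ih hprev
    omega

theorem notMem_periodicPts_gstep (hx : x ≠ 0) : x ∉ periodicPts (gstep n E) := by
  rintro hper
  obtain ⟨t, ht, hfix⟩ := mem_periodicPts.1 hper
  have := val_iterate_gstep_add_le (hfix.eq.symm ▸ hx)
  rw [hfix.eq] at this
  omega

theorem hits_iff_exists_iterate : hits n E y x ↔ ∃ t, (gstep n E)^[t] y = x := by
  refine ⟨fun ⟨t, _, ht⟩ => ⟨t, ht⟩, fun ⟨t, ht⟩ => ?_⟩
  by_cases htn : t ≤ n
  · exact ⟨t, htn, ht⟩
  have hn0 : (gstep n E)^[n] y = 0 := by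
    by_contra h
    have := val_iterate_gstep_add_le h
    have := ZMod.val_lt y
    omega
  refine ⟨n, le_rfl, ?_⟩
  rw [← ht, show t = (t - n) + n by omega, iterate_add_apply, hn0,
    iterate_fixed (gstep_zero E)]

theorem gstep_congr (h : E v = E' v) : gstep n E v = gstep n E' v := by
  unfold gstep; rw [h]

end Greedy

section HitCount

variable {n : ℕ} [NeZero n] {E E' : ZMod n → ZMod n} {x ξ : ZMod n}

noncomputable def hitCount (n : ℕ) [NeZero n] (E : ZMod n → ZMod n) (x : ZMod n) : ℝ :=
  ∑ y ∈ (univ : Finset (ZMod n)).erase 0, if hits n E y x then 1 else 0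

theorem hitCount_eq_one_add (hx : x ≠ 0) :
    hitCount n E x = 1 + ∑ ξ, if gstep n E ξ = x then hitCount n E ξ else 0 := by
  unfold hitCount
  simp only [hits_iff_exists_iterate,
    ite_exists_iterate_eq_add_sum (notMem_periodicPts_gstep (E := E) hx), sum_add_distrib]
  rw [sum_ite_eq' _ _ (fun _ => (1 : ℝ)), if_pos (mem_erase.2 ⟨hx, mem_univ x⟩), sum_comm,
    ← sum_filter]

theorem hitCount_congr (h : ∀ v ≠ ξ, E v = E' v) : hitCount n E ξ = hitCount n E' ξ := by
  unfold hitCount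
  simp only [hits_iff_exists_iterate]
  have hstep : ∀ v ≠ ξ, gstep n E v = gstep n E' v := fun v hv => gstep_congr (h v hv)
  refine sum_congr rfl fun y _ => if_congr ⟨exists_iterate_eq_of_eqOn_compl hstep,
    exists_iterate_eq_of_eqOn_compl fun v hv => (hstep v hv).symm⟩ rfl rfl

end HitCount

section Expectation

variable {n : ℕ} [NeZero n] {ℓ : ℕ → ℝ}

theorem ZMod.sum_eq_sum_range {M : Type*} [AddCommMonoid M] (F : ZMod n → M) :
    ∑ a, F a = ∑ m ∈ range n, F m :=
  sum_nbij' ZMod.val (↑) (fun a _ => mem_range.2 a.val_lt) (fun _ _ => mem_univ _)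
    (fun a _ => ZMod.natCast_zmod_val a) (fun _ hm => ZMod.val_cast_of_lt (mem_range.1 hm))
    (fun a _ => by rw [ZMod.natCast_zmod_val])

theorem ZMod.sum_val_sub_eq_sum_range {M : Type*} [AddCommMonoid M] (ξ : ZMod n) (F : ℕ → M) :
    ∑ a : ZMod n, F (ξ - a).val = ∑ L ∈ range n, F L := by
  refine ((Equiv.subLeft ξ).sum_comp (fun a => F a.val)).trans ?_
  rw [ZMod.sum_eq_sum_range]
  exact sum_congr rfl fun m hm => by rw [ZMod.val_cast_of_lt (mem_range.1 hm)]

theorem sum_range_eq_one (h0 : ℓ 0 = 0) (hsum : ∑ L ∈ Icc 1 (n - 1), ℓ L = 1) :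
    ∑ L ∈ range n, ℓ L = 1 := by
  rw [sum_range_eq_add_Ico _ (Nat.pos_of_neZero n), h0, zero_add, ← hsum,
    Icc_sub_one_right_eq_Ico_of_not_isMin (by simp [NeZero.ne n])]

theorem sum_wProd_eq_one (hℓ : ∑ L ∈ range n, ℓ L = 1) : ∑ E, wProd n ℓ E = 1 := by
  calc ∑ E, wProd n ℓ E = ∏ ξ : ZMod n, ∑ b, ℓ (ξ - b).val :=
      (Fintype.prod_sum fun (ξ b : ZMod n) => ℓ (ξ - b).val).symm
    _ = 1 := prod_eq_one fun ξ _ => by rw [ZMod.sum_val_sub_eq_sum_range ξ ℓ, hℓ]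

theorem gstep_eq_iff {E : ZMod n → ZMod n} {ξ x : ZMod n} :
    gstep n E ξ = x ↔ greedyDist ξ.val (ξ - E ξ).val = x.val := by
  rw [← val_gstep, (ZMod.val_injective n).eq_iff]

theorem hitProb_eq_add_sum (hℓ : ∑ L ∈ range n, ℓ L = 1) {x : ZMod n} (hx : x ≠ 0) :
    hitProb n ℓ x = 1 / ((n : ℝ) - 1) + ∑ m ∈ range n,
      (∑ L ∈ range n, if greedyDist m L = x.val then ℓ L else 0) * hitProb n ℓ m := by
  let A (ξ b : ZMod n) : ℝ := if greedyDist ξ.val (ξ - b).val = x.val then 1 else 0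
  have hexpand (E : ZMod n → ZMod n) : wProd n ℓ E * (hitCount n E x / ((n : ℝ) - 1)) =
      wProd n ℓ E * (1 / ((n : ℝ) - 1)) +
        ∑ ξ, wProd n ℓ E * A ξ (E ξ) * (hitCount n E ξ / ((n : ℝ) - 1)) := by
    rw [hitCount_eq_one_add hx, add_div, mul_add, sum_div, mul_sum]
    refine congrArg _ (sum_congr rfl fun ξ _ => ?_)
    simp only [A, gstep_eq_iff]
    split_ifs <;> ring
  have hindep (ξ : ZMod n) : ∑ E, wProd n ℓ E * A ξ (E ξ) * (hitCount n E ξ / ((n : ℝ) - 1)) =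
      (∑ L ∈ range n, if greedyDist ξ.val L = x.val then ℓ L else 0) * hitProb n ℓ ξ := by
    refine (sum_prod_mul_mul_eq_of_indep (fun j b => ℓ (j - b).val) ξ
      (by rw [ZMod.sum_val_sub_eq_sum_range ξ ℓ, hℓ]) (A ξ)
      (fun E => hitCount n E ξ / ((n : ℝ) - 1))
      (fun E E' h => by rw [hitCount_congr h])).trans (congrArg (· * hitProb n ℓ ξ) ?_)
    simp only [A, mul_boole]
    exact ZMod.sum_val_sub_eq_sum_range ξ (fun L => if greedyDist ξ.val L = x.val then ℓ L else 0)
  calc hitProb n ℓ x = ∑ E, wProd n ℓ E * (hitCount n E x / ((n : ℝ) - 1)) := rfl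
    _ = 1 / ((n : ℝ) - 1) + ∑ ξ, (∑ L ∈ range n, if greedyDist ξ.val L = x.val then ℓ L else 0) *
        hitProb n ℓ ξ := by
      simp only [hexpand, sum_add_distrib, ← sum_mul, sum_wProd_eq_one hℓ, one_mul]
      rw [sum_comm]
      simp only [hindep]
    _ = _ := by
      rw [ZMod.sum_eq_sum_range]
      refine congrArg _ (sum_congr rfl fun m hm => ?_)
      rw [ZMod.val_cast_of_lt (mem_range.1 hm)]

end Expectation

section Coefficients

variable {ℓ : ℕ → ℝ} {n m x : ℕ}

theorem greedyDist_eq_iff {L : ℕ} (hx : 1 ≤ x) (hL : L ≠ 0) :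
    greedyDist m L = x ↔ (x < m ∧ L = m - x) ∨ (m = x + 1 ∧ x + 1 < L) := by
  unfold greedyDist; split_ifs <;> omega

theorem sum_ite_greedyDist_eq (h0 : ℓ 0 = 0) (hx : 1 ≤ x) (hm : m < n) :
    ∑ L ∈ range n, (if greedyDist m L = x then ℓ L else 0) =
      (if x < m then ℓ (m - x) else 0) +
        if m = x + 1 then ∑ L ∈ Ioc (x + 1) (n - 1), ℓ L else 0 := by
  have hsplit : ∀ L ∈ range n, (if greedyDist m L = x then ℓ L else 0) =
      (if x < m ∧ L = m - x then ℓ L else 0) +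
        if m = x + 1 ∧ L ∈ Ioc (x + 1) (n - 1) then ℓ L else 0 := by
    intro L hL
    rcases Nat.eq_zero_or_pos L with rfl | hL0
    · simp [h0]
    · have := mem_range.1 hL
      simp only [greedyDist_eq_iff hx hL0.ne', mem_Ioc]
      split_ifs <;> first | omega | simp
  rw [sum_congr rfl hsplit, sum_add_distrib]
  have hmx : x < m → m - x < n := by omega
  have hIoc : range n ∩ Ioc (x + 1) (n - 1) = Ioc (x + 1) (n - 1) :=
    inter_eq_right.2 fun L hL => mem_range.2 (by have := mem_Ioc.1 hL; omega)
  simp only [ite_and, sum_ite_irrel, sum_const_zero, sum_ite_eq', mem_range, sum_ite_mem, hIoc]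
  split_ifs <;> simp_all

end Coefficients

theorem hitProb_backwards_eq_general (n : ℕ) [NeZero n] (hn : 2 ≤ n) (ℓ : ℕ → ℝ)
    (hsupp : ∀ x, x ∉ Icc 1 (n - 1) → ℓ x = 0)
    (hsum : ∑ x ∈ Icc 1 (n - 1), ℓ x = 1) :
    hitProb n ℓ ((n - 1 : ℕ) : ZMod n) = 1 / ((n : ℝ) - 1) ∧
    ∀ x : ℕ, 1 ≤ x → x ≤ n - 2 →
      hitProb n ℓ ((x : ℕ) : ZMod n)
        = (∑ ξ ∈ Ioc x (n - 1), hitProb n ℓ ((ξ : ℕ) : ZMod n) * ℓ (ξ - x))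
          + hitProb n ℓ ((x + 1 : ℕ) : ZMod n) * (∑ ξ ∈ Ioc (x + 1) (n - 1), ℓ ξ)
          + 1 / ((n : ℝ) - 1) := by
  have h0 : ℓ 0 = 0 := hsupp 0 (by simp)
  have hℓ := sum_range_eq_one h0 hsum
  have hval {x : ℕ} (hx : x < n) : ((x : ℕ) : ZMod n).val = x := ZMod.val_cast_of_lt hx
  have hne {x : ℕ} (hx1 : 1 ≤ x) (hx : x < n) : ((x : ℕ) : ZMod n) ≠ 0 := by
    rw [← ZMod.val_ne_zero, hval hx]; omega
  constructor
  · rw [hitProb_eq_add_sum hℓ (hne (by omega) (by omega)), hval (by omega), add_eq_left]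
    refine sum_eq_zero fun m hm => ?_
    rw [sum_eq_zero fun L _ => if_neg ?_, zero_mul]
    have := greedyDist_le m L
    have := mem_range.1 hm
    omega
  · intro x hx1 hx2
    rw [hitProb_eq_add_sum hℓ (hne hx1 (by omega)), hval (by omega)]
    rw [sum_congr rfl fun m hm => by rw [sum_ite_greedyDist_eq h0 hx1 (mem_range.1 hm)]]
    have hfilter : {m ∈ range n | x < m} = Ioc x (n - 1) := by
      ext m; simp only [mem_filter, mem_range, mem_Ioc]; omega
    simp only [add_mul, ite_mul, zero_mul, sum_add_distrib, sum_ite_eq', mem_range,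
      if_pos (show x + 1 < n by omega), ← sum_filter, hfilter]
    simp only [mul_comm (ℓ _)]
    ring

/-- The hitting probabilities of the greedy routing chain on the directed `n`-cycle with
independent `ℓ`-distributed shortcuts satisfy the backwards equations:
`h (n-1) = 1/(n-1)` and, for `1 ≤ x ≤ n-2`,
`h x = ∑_{ξ=x+1}^{n-1} h ξ ℓ(ξ - x) + h (x+1) ∑_{ξ=x+2}^{n-1} ℓ ξ + 1/(n-1)`. -/
theorem hitProb_backwards_eq (n : ℕ) [NeZero n] (hn : 2 ≤ n) (ℓ : ℕ → ℝ)
    (hl0 : ∀ x, 0 ≤ ℓ x) (hsupp : ∀ x, x ∉ Icc 1 (n - 1) → ℓ x = 0)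
    (hsum : ∑ x ∈ Icc 1 (n - 1), ℓ x = 1) :
    hitProb n ℓ ((n - 1 : ℕ) : ZMod n) = 1 / ((n : ℝ) - 1) ∧
    ∀ x : ℕ, 1 ≤ x → x ≤ n - 2 →
      hitProb n ℓ ((x : ℕ) : ZMod n)
        = (∑ ξ ∈ Ioc x (n - 1), hitProb n ℓ ((ξ : ℕ) : ZMod n) * ℓ (ξ - x))
          + hitProb n ℓ ((x + 1 : ℕ) : ZMod n) * (∑ ξ ∈ Ioc (x + 1) (n - 1), ℓ ξ)
          + 1 / ((n : ℝ) - 1) :=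
  hitProb_backwards_eq_general n hn ℓ hsupp hsum
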